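/- arXiv:2406.07118 — 5 statements merged into one kernel-verified Lean document; each statement's English description precedes it below -/
import Mathlib

section
/- Let G be a finite group acting transitively on finite sets Ω₁ and Ω₂ of sizes m and n respectively. Fix α ∈ Ω₁, let G_α be the stabilizer of α, and let Δ₂ = ⋃_{i=1}^s δᵢG_α be a union of s distinct G_α-orbits on Ω₂ with representatives δ₁,…,δ_s. If Δ₂ ≠ Ω₂ and 𝓑 = {Δ₂g : g ∈ G}, then (Ω₂, 𝓑) is a 1-design with n points, block size |Δ₂|, and replication number (|G_α|/|G_{Δ₂}|)·Σ_{i=1}^s |αG_{δᵢ}|, i.e., every point of Ω₂ lies in exactly that many blocks. -/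
/-! Fix `p` and count the `g` with `p ∈ g • Δ₂` in two ways. Those carrying `Δ₂` onto a given block
through `p` form a coset of `G_{Δ₂}`, so there are `r_p · |G_{Δ₂}|` of them, `r_p` being the number
of blocks through `p`. On the other hand `p ∈ g • Δ₂` iff `g⁻¹ • p ∈ Δ₂`, and by transitivity each
point of `Δ₂` is the image of `p` under `|G_p|` elements, giving `|Δ₂| · |G_p|`. Finally
`|Δ₂| = Σᵢ |δᵢ G_α|`, and, as `|G_p| = |G_{δᵢ}|`,
`|G_p| · |δᵢ G_α| = |G_{δᵢ}| · [G_α : G_α ∩ G_{δᵢ}] = |G_α| · [G_{δᵢ} : G_α ∩ G_{δᵢ}] = |G_α| · |α G_{δᵢ}|`. -/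

open MulAction Pointwise

theorem Nat.card_iUnion_of_pairwise_disjoint {ι α : Type*} [Fintype ι] {t : ι → Set α}
    [∀ i, Finite (t i)] (h : Pairwise (Function.onFun Disjoint t)) :
    Nat.card (⋃ i, t i) = ∑ i, Nat.card (t i) := by
  rw [Nat.card_congr (Set.unionEqSigmaOfDisjoint h), Nat.card_sigma]

theorem Subgroup.card_mul_relIndex_comm {G : Type*} [Group G] (H K : Subgroup G) :
    Nat.card H * H.relIndex K = Nat.card K * K.relIndex H := by
  have hK : Nat.card (H ⊓ K : Subgroup G) * H.relIndex K = Nat.card K := by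
    rw [← inf_relIndex_right H K, ← relIndex_bot_left (H ⊓ K),
      relIndex_mul_relIndex _ _ _ bot_le inf_le_right, relIndex_bot_left]
  have hH : Nat.card (H ⊓ K : Subgroup G) * K.relIndex H = Nat.card H := by
    rw [← inf_relIndex_left H K, ← relIndex_bot_left (H ⊓ K),
      relIndex_mul_relIndex _ _ _ bot_le inf_le_left, relIndex_bot_left]
  rw [← hH, ← hK]
  ring

namespace MulAction

variable {G X Y : Type*} [Group G] [MulAction G X] [MulAction G Y]

theorem card_orbit_stabilizer_eq_relIndex (a : X) (b : Y) :
    Nat.card (orbit (stabilizer G a) b) = (stabilizer G b).relIndex (stabilizer G a) := by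
  have key : (stabilizer G b).subgroupOf (stabilizer G a) = stabilizer (stabilizer G a) b := by
    ext; rfl
  rw [Subgroup.relIndex, key, index_stabilizer, Nat.card_coe_set_eq]

theorem card_stabilizer_mul_card_orbit_stabilizer_comm (a : X) (b : Y) :
    Nat.card (stabilizer G b) * Nat.card (orbit (stabilizer G a) b) =
      Nat.card (stabilizer G a) * Nat.card (orbit (stabilizer G b) a) := by
  simp only [card_orbit_stabilizer_eq_relIndex]
  exact Subgroup.card_mul_relIndex_comm _ _

theorem card_stabilizer_of_mem_orbit {x y : X} (h : y ∈ orbit G x) :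
    Nat.card (stabilizer G y) = Nat.card (stabilizer G x) := by
  obtain ⟨g, rfl⟩ := h
  exact (Nat.card_congr (stabilizerEquivStabilizer rfl).toEquiv).symm

theorem card_smul_eq_of_mem_orbit {x y : X} (h : y ∈ orbit G x) :
    Nat.card {g : G // g • x = y} = Nat.card (stabilizer G x) := by
  obtain ⟨g₀, rfl⟩ := h
  refine Nat.card_congr
    { toFun := fun g => ⟨g₀⁻¹ * g, ?_⟩
      invFun := fun h => ⟨g₀ * h, ?_⟩
      left_inv := fun g => by simp
      right_inv := fun h => by simp }
  · rw [mem_stabilizer_iff, mul_smul, g.2, inv_smul_smul]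
  · rw [mul_smul, mem_stabilizer_iff.mp h.2]

theorem card_smul_mem_eq [Finite G] (x : X) (S : Set X) :
    Nat.card {g : G // g • x ∈ S} = Nat.card ↥(S ∩ orbit G x) * Nat.card (stabilizer G x) := by
  have : Fintype ↥(S ∩ orbit G x) :=
    ((Set.finite_range _).subset Set.inter_subset_right).fintype
  let f : {g : G // g • x ∈ S} → ↥(S ∩ orbit G x) := fun g => ⟨g.1 • x, g.2, g.1, rfl⟩
  have hfiber (y : ↥(S ∩ orbit G x)) : Nat.card {g // f g = y} = Nat.card (stabilizer G x) := by
    rw [← card_smul_eq_of_mem_orbit y.2.2]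
    exact Nat.card_congr
      { toFun := fun g => ⟨g.1.1, congrArg Subtype.val g.2⟩
        invFun := fun g => ⟨⟨g.1, by rw [g.2]; exact y.2.1⟩, Subtype.ext g.2⟩
        left_inv := fun _ => rfl
        right_inv := fun _ => rfl }
  rw [Nat.card_congr (Equiv.sigmaFiberEquiv f).symm, Nat.card_sigma]
  simp only [hfiber, Finset.sum_const, Finset.card_univ, smul_eq_mul, Nat.card_eq_fintype_card]

variable [Finite G]

theorem card_mem_smul_set_eq_card_mul_card_stabilizer [IsPretransitive G X] (Δ : Set X) (p : X) :
    Nat.card {g : G // p ∈ g • Δ} = Nat.card Δ * Nat.card (stabilizer G p) := by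
  rw [Nat.card_congr ((Equiv.inv G).subtypeEquiv (q := fun g => g • p ∈ Δ)
    fun _ => Set.mem_smul_set_iff_inv_smul_mem),
    card_smul_mem_eq, orbit_eq_univ, Set.inter_univ]

theorem card_mem_smul_set_eq_card_translates_mul_card_stabilizer (Δ : Set X) (p : X) :
    Nat.card {g : G // p ∈ g • Δ} =
      Nat.card {B : Set X // B ∈ orbit G Δ ∧ p ∈ B} * Nat.card (stabilizer G Δ) := by
  refine (card_smul_mem_eq Δ {B | p ∈ B}).trans ?_
  exact congrArg (· * _) (Nat.card_congr (Equiv.subtypeEquivRight fun _ => and_comm))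

end MulAction

theorem stmt0_general {G Ω₁ Ω₂ : Type*} [Group G] [Finite G]
    [MulAction G Ω₁] [MulAction G Ω₂]
    (h2 : MulAction.IsPretransitive G Ω₂)
    (α : Ω₁) (s : ℕ) (δ : Fin s → Ω₂)
    (hdist : ∀ i j : Fin s, i ≠ j →
      MulAction.orbit (MulAction.stabilizer G α) (δ i) ≠
        MulAction.orbit (MulAction.stabilizer G α) (δ j))
    (Δ₂ : Set Ω₂)
    (hΔ : Δ₂ = ⋃ i : Fin s, MulAction.orbit (MulAction.stabilizer G α) (δ i))
    (𝓑 : Set (Set Ω₂)) (h𝓑 : 𝓑 = {B | ∃ g : G, B = g • Δ₂}) :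
    (∀ B ∈ 𝓑, Nat.card B = Nat.card Δ₂) ∧
    ∀ p : Ω₂,
      Nat.card (MulAction.stabilizer G Δ₂) *
        Nat.card {B : Set Ω₂ // B ∈ 𝓑 ∧ p ∈ B} =
      Nat.card (MulAction.stabilizer G α) *
        ∑ i : Fin s, Nat.card (MulAction.orbit (MulAction.stabilizer G (δ i)) α) := by
  have hblocks : 𝓑 = orbit G Δ₂ := by
    ext B
    simp only [h𝓑, Set.mem_ofPred_eq, mem_orbit_iff, eq_comm]
  subst hblocks
  refine ⟨fun _ ⟨g, hg⟩ => by rw [← hg, Nat.card_coe_set_eq, Nat.card_coe_set_eq,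
    Set.ncard_smul_set], fun p => ?_⟩
  have hcard : Nat.card Δ₂ = ∑ i, Nat.card (orbit (stabilizer G α) (δ i)) := by
    have (i : Fin s) : Finite (orbit (stabilizer G α) (δ i)) := (Set.finite_range _).to_subtype
    rw [hΔ]
    exact Nat.card_iUnion_of_pairwise_disjoint fun i j hij =>
      (orbit.eq_or_disjoint _ _).resolve_left (hdist i j hij)
  rw [mul_comm, ← card_mem_smul_set_eq_card_translates_mul_card_stabilizer,
    card_mem_smul_set_eq_card_mul_card_stabilizer, hcard, Finset.sum_mul, Finset.mul_sum]
  refine Finset.sum_congr rfl fun i _ => ?_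
  rw [mul_comm, card_stabilizer_of_mem_orbit (h2.exists_smul_eq (δ i) p),
    card_stabilizer_mul_card_orbit_stabilizer_comm]

/-- Key–Moori type construction (Theorem 1): if `G` acts transitively on finite sets
`Ω₁` and `Ω₂`, `α ∈ Ω₁`, and `Δ₂` is a union of `s` distinct `G_α`-orbits on `Ω₂`
with `Δ₂ ≠ Ω₂`, then `(Ω₂, {Δ₂g : g ∈ G})` is a 1-design: every block has size `|Δ₂|`
and every point lies in exactly `(|G_α|/|G_{Δ₂}|)·Σᵢ |αG_{δᵢ}|` blocks
(stated multiplicatively, since the division is exact). -/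
theorem stmt0 {G Ω₁ Ω₂ : Type*} [Group G] [Finite G] [Fintype Ω₁] [Fintype Ω₂]
    [MulAction G Ω₁] [MulAction G Ω₂]
    (h1 : MulAction.IsPretransitive G Ω₁) (h2 : MulAction.IsPretransitive G Ω₂)
    (α : Ω₁) (s : ℕ) (δ : Fin s → Ω₂)
    (hdist : ∀ i j : Fin s, i ≠ j →
      MulAction.orbit (MulAction.stabilizer G α) (δ i) ≠
        MulAction.orbit (MulAction.stabilizer G α) (δ j))
    (Δ₂ : Set Ω₂)
    (hΔ : Δ₂ = ⋃ i : Fin s, MulAction.orbit (MulAction.stabilizer G α) (δ i))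
    (hproper : Δ₂ ≠ Set.univ)
    (𝓑 : Set (Set Ω₂)) (h𝓑 : 𝓑 = {B | ∃ g : G, B = g • Δ₂}) :
    (∀ B ∈ 𝓑, Nat.card B = Nat.card Δ₂) ∧
    ∀ p : Ω₂,
      Nat.card (MulAction.stabilizer G Δ₂) *
        Nat.card {B : Set Ω₂ // B ∈ 𝓑 ∧ p ∈ B} =
      Nat.card (MulAction.stabilizer G α) *
        ∑ i : Fin s, Nat.card (MulAction.orbit (MulAction.stabilizer G (δ i)) α) :=
  stmt0_general h2 α s δ hdist Δ₂ hΔ 𝓑 h𝓑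
end

section
/- Let G ≤ PΓL(v,q) act transitively on the 1-subspaces of F_q^v, let P be the stabilizer in G of a 1-subspace α, and let Δ be a union of P-orbits of 1-subspaces containing α whose union forms a subspace of F_q^v. If {αg : g ∈ G, αg⁻¹ ∈ Δ} = Δ, then the relation on 1-subspaces given by x ~ y iff y ∈ Δg for some g with x = αg is symmetric; consequently the sets {Δg : g ∈ G} are the neighborhoods of a (dim Δ − 1)-regular q-ary graph on which G acts as an automorphism group transitively on vertices. -/
open Module

/-- Theorem 3: let `G ≤ PΓL(v,q)` (modelled as a group acting on the subspaces,
preserving inclusion, sups and dimension) act transitively on the 1-subspaces, let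
`P = G_α` for a 1-subspace `α`, and let `Δ` be a subspace containing `α` whose
1-subspaces form a union of `P`-orbits. If `{αg : g ∈ G, αg⁻¹ ∈ Δ} = Δ`, then the
relation `x ~ y ↔ y ∈ Δg for some g with αg = x` is symmetric; consequently the
`Δg` are the neighborhoods of a `(dim Δ − 1)`-regular `q`-ary graph (with edge set
`E`), on which `G` acts as an automorphism group transitively on vertices. -/
theorem stmt3 {F V G : Type*} [Field F] [Fintype F] [AddCommGroup V] [Module F V]
    [FiniteDimensional F V] [Group G] [MulAction G (Submodule F V)]
    (hle : ∀ (g : G) (x y : Submodule F V), x ≤ y ↔ g • x ≤ g • y)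
    (hrank : ∀ (g : G) (x : Submodule F V), finrank F ↥(g • x) = finrank F ↥x)
    (hsup : ∀ (g : G) (x y : Submodule F V), g • (x ⊔ y) = g • x ⊔ g • y)
    (htrans : ∀ x y : Submodule F V,
      finrank F ↥x = 1 → finrank F ↥y = 1 → ∃ g : G, g • x = y)
    (α Δ : Submodule F V) (hα : finrank F ↥α = 1) (hαΔ : α ≤ Δ)
    (horb : ∀ g : G, g • α = α →
      ∀ x : Submodule F V, finrank F ↥x = 1 → x ≤ Δ → g • x ≤ Δ)
    (hsym : ∀ x : Submodule F V, finrank F ↥x = 1 →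
      (x ≤ Δ ↔ ∃ g : G, g • α = x ∧ g⁻¹ • α ≤ Δ))
    (E : Set (Submodule F V))
    (hE : E = {e | ∃ (g : G) (y : Submodule F V),
      finrank F ↥y = 1 ∧ y ≤ g • Δ ∧ y ≠ g • α ∧ e = g • α ⊔ y}) :
    (∀ x y : Submodule F V, finrank F ↥x = 1 → finrank F ↥y = 1 →
      (∃ g : G, g • α = x ∧ y ≤ g • Δ) → ∃ g : G, g • α = y ∧ x ≤ g • Δ) ∧
    (∀ x : Submodule F V, finrank F ↥x = 1 → ∃ g : G, g • α = x ∧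
      finrank F ↥(g • Δ) = finrank F ↥Δ ∧
      ∀ y : Submodule F V, finrank F ↥y = 1 → ((y = x ∨ x ⊔ y ∈ E) ↔ y ≤ g • Δ)) ∧
    (∀ (g : G) (e : Submodule F V), e ∈ E → g • e ∈ E) := by
  subst hE
  have hsmul_le : ∀ (g : G) (x y : Submodule F V), x ≤ g • y ↔ g⁻¹ • x ≤ y := by
    intro g x y
    rw [hle g⁻¹ x (g • y), inv_smul_smul]
  have wd : ∀ (g g' : G) (y : Submodule F V), g • α = g' • α → finrank F ↥y = 1 →
      y ≤ g • Δ → y ≤ g' • Δ := by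
    intro g g' y hgg' hy hyΔ
    rw [hsmul_le] at hyΔ ⊢
    have hstab : (g'⁻¹ * g) • α = α := by
      rw [mul_smul, hgg', inv_smul_smul]
    have := horb _ hstab (g⁻¹ • y) (by rw [hrank]; exact hy) hyΔ
    rwa [mul_smul, smul_inv_smul] at this
  have sym : ∀ x y : Submodule F V, finrank F ↥x = 1 → finrank F ↥y = 1 →
      (∃ g : G, g • α = x ∧ y ≤ g • Δ) → ∃ g : G, g • α = y ∧ x ≤ g • Δ := by
    rintro x y hx hy ⟨g, hgα, hyΔ⟩
    have h1 : g⁻¹ • y ≤ Δ := (hsmul_le g y Δ).mp hyΔ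
    have h2 : finrank F ↥(g⁻¹ • y) = 1 := by rw [hrank]; exact hy
    obtain ⟨k, hk1, hk2⟩ := (hsym _ h2).mp h1
    refine ⟨g * k, ?_, ?_⟩
    · rw [mul_smul, hk1, smul_inv_smul]
    · rw [hsmul_le, ← hgα, mul_inv_rev, mul_smul, inv_smul_smul]
      exact hk2
  have rank2 : ∀ x y : Submodule F V, finrank F ↥x = 1 → finrank F ↥y = 1 → x ≠ y →
      finrank F ↥(x ⊔ y) = 2 := by
    intro x y hx hy hxy
    have h := Submodule.finrank_sup_add_finrank_inf_eq x y
    have hinf : finrank F ↥(x ⊓ y) = 0 := by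
      by_contra hne
      have h1 : finrank F ↥(x ⊓ y) ≤ finrank F ↥x :=
        Submodule.finrank_mono inf_le_left
      have h2 : finrank F ↥(x ⊓ y) = 1 := by omega
      have ex : x ⊓ y = x :=
        Submodule.eq_of_le_of_finrank_eq inf_le_left (by rw [h2, hx])
      have ey : x ⊓ y = y :=
        Submodule.eq_of_le_of_finrank_eq inf_le_right (by rw [h2, hy])
      exact hxy (ex.symm.trans ey)
    omega
  refine ⟨sym, ?_, ?_⟩
  · intro x hx
    obtain ⟨g, hg⟩ := htrans α x hα hx
    refine ⟨g, hg, hrank g Δ, ?_⟩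
    intro y hy
    constructor
    · rintro (rfl | ⟨h, z, hz1, hz2, hz3, hz4⟩)
      · rw [hsmul_le, ← hg, inv_smul_smul]; exact hαΔ
      · have hhα : finrank F ↥(h • α) = 1 := by rw [hrank]; exact hα
        have he2 : finrank F ↥(h • α ⊔ z) = 2 := rank2 _ _ hhα hz1 (Ne.symm hz3)
        have hxe : x ≤ h • α ⊔ z := le_trans le_sup_left hz4.le
        have hye : y ≤ h • α ⊔ z := le_trans le_sup_right hz4.le
        have hαΔh : h • α ≤ h • Δ := (hle h α Δ).mp hαΔ
        have heΔ : h • α ⊔ z ≤ h • Δ := sup_le hαΔh hz2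
        by_cases hcase : x = h • α
        · exact wd h g y (hg.trans hcase).symm hy (hye.trans heΔ)
        · obtain ⟨k, hk1, hk2⟩ := sym (h • α) x hhα hx ⟨h, rfl, hxe.trans heΔ⟩
          have hxk : x ≤ k • Δ := by
            rw [hsmul_le, ← hk1, inv_smul_smul]; exact hαΔ
          have heq : h • α ⊔ x = h • α ⊔ z := by
            apply Submodule.eq_of_le_of_finrank_eq (sup_le le_sup_left hxe)
            rw [he2, rank2 _ _ hhα hx (fun e => hcase e.symm)]
          have hyk : y ≤ k • Δ := by
            refine le_trans (le_trans hye heq.symm.le) (sup_le hk2 hxk)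
          exact wd k g y (hk1.trans hg.symm) hy hyk
    · intro hyg
      by_cases hxy : y = x
      · exact Or.inl hxy
      · refine Or.inr ⟨g, y, hy, hyg, by rw [hg]; exact hxy, by rw [hg]⟩
  · rintro g e ⟨h, z, hz1, hz2, hz3, rfl⟩
    refine ⟨g * h, g • z, by rw [hrank]; exact hz1, ?_, ?_, ?_⟩
    · rw [mul_smul]; exact (hle g z (h • Δ)).mp hz2
    · intro hc
      rw [mul_smul] at hc
      exact hz3 (smul_left_cancel g hc)
    · rw [hsup, mul_smul]
end

section
/- Every regular q-ary graph in F_q^v that admits an automorphism group G acting transitively on the 1-subspaces arises from the transitive construction: its neighborhood Δ of a fixed vertex α is a union of orbits of the stabilizer P = G_α, the union of 1-subspaces in Δ is a subspace, it satisfies {αg : g ∈ G, αg⁻¹ ∈ Δ} = Δ, and the neighborhoods of all vertices are the G-images of Δ with Δg being the neighborhood of αg. -/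
open Module

/-- Corollary 4: every regular `q`-ary graph admitting a vertex-transitive automorphism
group `G ≤ PΓL(v,q)` arises from the transitive construction: the neighborhood subspace
`Δ` of a fixed vertex `α` is a union of orbits of the stabilizer of `α`, it satisfies
`{αg : g ∈ G, αg⁻¹ ∈ Δ} = Δ`, and `Δg` is the neighborhood subspace of `αg` for every
`g ∈ G`. -/
theorem stmt4 {F V G : Type*} [Field F] [Fintype F] [AddCommGroup V] [Module F V]
    [FiniteDimensional F V] [Group G] [MulAction G (Submodule F V)]
    (hle : ∀ (g : G) (x y : Submodule F V), x ≤ y ↔ g • x ≤ g • y)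
    (hrank : ∀ (g : G) (x : Submodule F V), finrank F ↥(g • x) = finrank F ↥x)
    (hsup : ∀ (g : G) (x y : Submodule F V), g • (x ⊔ y) = g • x ⊔ g • y)
    (htrans : ∀ x y : Submodule F V,
      finrank F ↥x = 1 → finrank F ↥y = 1 → ∃ g : G, g • x = y)
    (E : Set (Submodule F V)) (k : ℕ)
    (hE2 : ∀ e ∈ E, finrank F ↥e = 2)
    (haut : ∀ (g : G) (e : Submodule F V), e ∈ E → g • e ∈ E)
    (N : Submodule F V → Submodule F V)
    (hreg : ∀ x : Submodule F V, finrank F ↥x = 1 → finrank F ↥(N x) = k + 1 ∧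
      ∀ y : Submodule F V, finrank F ↥y = 1 → ((y = x ∨ x ⊔ y ∈ E) ↔ y ≤ N x))
    (α : Submodule F V) (hα : finrank F ↥α = 1)
    (Δ : Submodule F V) (hΔ : Δ = N α) :
    (∀ g : G, g • α = α →
      ∀ x : Submodule F V, finrank F ↥x = 1 → x ≤ Δ → g • x ≤ Δ) ∧
    (∀ x : Submodule F V, finrank F ↥x = 1 →
      (x ≤ Δ ↔ ∃ g : G, g • α = x ∧ g⁻¹ • α ≤ Δ)) ∧
    (∀ (g : G) (y : Submodule F V), finrank F ↥y = 1 →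
      ((y = g • α ∨ (g • α) ⊔ y ∈ E) ↔ y ≤ g • Δ)) := by

  subst hΔ
  have key : ∀ (g : G) (y : Submodule F V), finrank F ↥y = 1 →
      ((y = g • α ∨ g • α ⊔ y ∈ E) ↔ y ≤ g • N α) := by
    intro g y hy
    have h1 : finrank F ↥(g⁻¹ • y) = 1 := by rw [hrank]; exact hy
    have h2 := (hreg α hα).2 (g⁻¹ • y) h1
    have h3 : y ≤ g • N α ↔ g⁻¹ • y ≤ N α := by
      rw [hle g⁻¹ y (g • N α), inv_smul_smul]
    have h5 : (y = g • α) ↔ (g⁻¹ • y = α) := by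
      constructor
      · intro h; rw [h, inv_smul_smul]
      · intro h; rw [← h, smul_inv_smul]
    have h6 : (g • α ⊔ y ∈ E) ↔ (α ⊔ g⁻¹ • y ∈ E) := by
      constructor
      · intro h; have := haut g⁻¹ _ h; rwa [hsup, inv_smul_smul] at this
      · intro h; have := haut g _ h; rwa [hsup, smul_inv_smul] at this
    exact (or_congr h5 h6).trans (h2.trans h3.symm)
  refine ⟨?_, ?_, ?_⟩
  · intro g hg x hx hxΔ
    have hx' := ((hreg α hα).2 x hx).mpr hxΔ
    have hgx : finrank F ↥(g • x) = 1 := by rw [hrank]; exact hx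
    apply ((hreg α hα).2 (g • x) hgx).mp
    rcases hx' with h | h
    · left; rw [h, hg]
    · right; have := haut g _ h; rwa [hsup, hg] at this
  · intro x hx
    constructor
    · intro hxΔ
      obtain ⟨g, hg⟩ := htrans α x hα hx
      refine ⟨g, hg, ?_⟩
      have h1 : finrank F ↥(g⁻¹ • α) = 1 := by rw [hrank]; exact hα
      apply ((hreg α hα).2 _ h1).mp
      rcases ((hreg α hα).2 x hx).mpr hxΔ with h | h
      · left
        have h2 : g • α = α := by rw [hg, h]
        have h3 : g⁻¹ • (g • α) = g⁻¹ • α := by rw [h2]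
        rw [inv_smul_smul] at h3
        exact h3.symm
      · right
        have := haut g⁻¹ _ h
        rw [hsup, ← hg, inv_smul_smul] at this
        rwa [sup_comm] at this
    · rintro ⟨g, hg, hg'⟩
      have h1 : finrank F ↥(g⁻¹ • α) = 1 := by rw [hrank]; exact hα
      apply ((hreg α hα).2 x hx).mp
      rcases ((hreg α hα).2 _ h1).mpr hg' with h | h
      · left
        have h2 : g • (g⁻¹ • α) = g • α := by rw [h]
        rw [smul_inv_smul] at h2
        exact (h2.trans hg).symm
      · right
        have := haut g _ h
        rw [hsup, smul_inv_smul, hg] at this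
        rwa [sup_comm] at this
  · exact fun g y hy => key g y hy
end

section
/- Let S be a partition of F_q^v into n subspaces of dimension t, and for each i let ℰᵢ be a strongly regular q-ary graph with parameters (t, k, λ, μ; q) defined on the i-th part (viewed as F_q^t). Then the disjoint union of ℰ₁,…,ℰₙ (edge set the union of the edge sets) is a quasi-strongly regular q-ary graph of grade 2 with parameters (v, k, λ, μ, 0; q): it is k-regular, adjacent vertices share λ common neighbors, non-adjacent vertices in the same part share μ common neighbors, and vertices in different parts share 0 common neighbors. -/
open Module

/-- The number of common neighbors of `x` and `y` (excluding `x, y` themselves) in the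
`q`-ary graph with edge set `E`, where `N(x) = {z : z = x ∨ x ⊔ z ∈ E}`. -/
noncomputable def commonNbrs {F V : Type*} [Field F] [AddCommGroup V] [Module F V]
    (E : Set (Submodule F V)) (x y : Submodule F V) : ℕ :=
  Nat.card {z : Submodule F V // Module.finrank F ↥z = 1 ∧ z ≠ x ∧ z ≠ y ∧
    (z = x ∨ x ⊔ z ∈ E) ∧ (z = y ∨ y ⊔ z ∈ E)}

/-- As `commonNbrs`, but counting only common neighbors lying in the subspace `W`. -/
noncomputable def commonNbrsIn {F V : Type*} [Field F] [AddCommGroup V] [Module F V]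
    (E : Set (Submodule F V)) (W x y : Submodule F V) : ℕ :=
  Nat.card {z : Submodule F V // Module.finrank F ↥z = 1 ∧ z ≤ W ∧ z ≠ x ∧ z ≠ y ∧
    (z = x ∨ x ⊔ z ∈ E) ∧ (z = y ∨ y ⊔ z ∈ E)}

/-- Let `S` be a partition of `F_q^v` into `t`-dimensional subspaces and let the edge
set `E` restrict, on each part `W ∈ S`, to a strongly regular `q`-ary graph with
parameters `(t,k,λ,μ;q)`. Then the disjoint union is a quasi-strongly regular `q`-ary
graph of grade 2 with parameters `(v,k,λ,μ,0;q)`: it is `k`-regular, adjacent vertices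
share `λ` common neighbors, non-adjacent vertices in a common part share `μ`, and
vertices in no common part share `0`. -/
theorem stmt10 {F V : Type*} [Field F] [Fintype F] [AddCommGroup V] [Module F V]
    [FiniteDimensional F V]
    (S : Set (Submodule F V)) (t k lam mu : ℕ)
    (hdim : ∀ W ∈ S, finrank F ↥W = t)
    (hpart : ∀ x : Submodule F V, finrank F ↥x = 1 → ∃! W, W ∈ S ∧ x ≤ W)
    (E : Set (Submodule F V))
    (hEsub : ∀ e ∈ E, finrank F ↥e = 2 ∧ ∃ W ∈ S, e ≤ W)
    (hregW : ∀ W ∈ S, ∀ x : Submodule F V, finrank F ↥x = 1 → x ≤ W →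
      ∃ U : Submodule F V, U ≤ W ∧ finrank F ↥U = k + 1 ∧
        ∀ y : Submodule F V, finrank F ↥y = 1 → y ≤ W →
          ((y = x ∨ x ⊔ y ∈ E) ↔ y ≤ U))
    (hlamW : ∀ W ∈ S, ∀ x y : Submodule F V, finrank F ↥x = 1 → finrank F ↥y = 1 →
      x ≤ W → y ≤ W → x ≠ y → x ⊔ y ∈ E → commonNbrsIn E W x y = lam)
    (hmuW : ∀ W ∈ S, ∀ x y : Submodule F V, finrank F ↥x = 1 → finrank F ↥y = 1 →
      x ≤ W → y ≤ W → x ≠ y → x ⊔ y ∉ E → commonNbrsIn E W x y = mu) :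
    (∀ x : Submodule F V, finrank F ↥x = 1 → ∃ U : Submodule F V,
      finrank F ↥U = k + 1 ∧
      ∀ y : Submodule F V, finrank F ↥y = 1 → ((y = x ∨ x ⊔ y ∈ E) ↔ y ≤ U)) ∧
    (∀ x y : Submodule F V, finrank F ↥x = 1 → finrank F ↥y = 1 → x ≠ y →
      x ⊔ y ∈ E → commonNbrs E x y = lam) ∧
    (∀ x y : Submodule F V, finrank F ↥x = 1 → finrank F ↥y = 1 → x ≠ y →
      x ⊔ y ∉ E → (∃ W ∈ S, x ≤ W ∧ y ≤ W) → commonNbrs E x y = mu) ∧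
    (∀ x y : Submodule F V, finrank F ↥x = 1 → finrank F ↥y = 1 → x ≠ y →
      (¬ ∃ W ∈ S, x ≤ W ∧ y ≤ W) → commonNbrs E x y = 0) := by
  have key : ∀ x z : Submodule F V, finrank F ↥x = 1 → ∀ W ∈ S, x ≤ W →
      x ⊔ z ∈ E → z ≤ W := by
    intro x z hx W hW hxW he
    obtain ⟨_, W', hW', hle⟩ := hEsub _ he
    obtain ⟨Wu, hWu, huniq⟩ := hpart x hx
    have h1 : W' = Wu := huniq _ ⟨hW', le_trans le_sup_left hle⟩
    have h2 : W = Wu := huniq _ ⟨hW, hxW⟩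
    calc z ≤ x ⊔ z := le_sup_right
    _ ≤ W' := hle
    _ = W := by rw [h1, h2]
  have cnEq : ∀ x y : Submodule F V, finrank F ↥x = 1 → ∀ W ∈ S, x ≤ W →
      commonNbrs E x y = commonNbrsIn E W x y := by
    intro x y hx W hW hxW
    unfold commonNbrs commonNbrsIn
    apply Nat.card_congr
    apply Equiv.subtypeEquivRight
    intro z
    constructor
    · rintro ⟨h1, h2, h3, h4, h5⟩
      refine ⟨h1, ?_, h2, h3, h4, h5⟩
      rcases h4 with rfl | he
      · exact absurd rfl h2
      · exact key x z hx W hW hxW he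
    · rintro ⟨h1, _, h2, h3, h4, h5⟩
      exact ⟨h1, h2, h3, h4, h5⟩
  refine ⟨?_, ?_, ?_, ?_⟩
  · intro x hx
    obtain ⟨W, ⟨hW, hxW⟩, _⟩ := hpart x hx
    obtain ⟨U, hUW, hU, hU2⟩ := hregW W hW x hx hxW
    refine ⟨U, hU, fun y hy => ?_⟩
    by_cases hyW : y ≤ W
    · exact hU2 y hy hyW
    · constructor
      · rintro (rfl | he)
        · exact absurd hxW hyW
        · exact absurd (key x y hx W hW hxW he) hyW
      · intro h; exact absurd (h.trans hUW) hyW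
  · intro x y hx hy hxy he
    obtain ⟨_, W, hW, hle⟩ := hEsub _ he
    have hxW := le_sup_left.trans hle
    have hyW := le_sup_right.trans hle
    rw [cnEq x y hx W hW hxW]
    exact hlamW W hW x y hx hy hxW hyW hxy he
  · rintro x y hx hy hxy he ⟨W, hW, hxW, hyW⟩
    rw [cnEq x y hx W hW hxW]
    exact hmuW W hW x y hx hy hxW hyW hxy he
  · intro x y hx hy hxy hno
    unfold commonNbrs
    have : IsEmpty {z : Submodule F V // finrank F ↥z = 1 ∧ z ≠ x ∧ z ≠ y ∧
        (z = x ∨ x ⊔ z ∈ E) ∧ (z = y ∨ y ⊔ z ∈ E)} := by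
      constructor
      rintro ⟨z, hz, hzx, hzy, hA, hB⟩
      rcases hA with rfl | heA
      · exact hzx rfl
      rcases hB with rfl | heB
      · exact hzy rfl
      obtain ⟨Wz, ⟨hWz, hzWz⟩, huniq⟩ := hpart z hz
      obtain ⟨_, W1, hW1, hle1⟩ := hEsub _ heA
      obtain ⟨_, W2, hW2, hle2⟩ := hEsub _ heB
      have e1 : W1 = Wz := huniq _ ⟨hW1, le_sup_right.trans hle1⟩
      have e2 : W2 = Wz := huniq _ ⟨hW2, le_sup_right.trans hle2⟩
      exact hno ⟨Wz, hWz, e1 ▸ le_sup_left.trans hle1, e2 ▸ le_sup_left.trans hle2⟩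
    exact Nat.card_of_isEmpty
end

section
/- The symplectic q-ary graph ℰ in F_q^v (v even, edges the totally isotropic 2-subspaces of a nondegenerate symplectic form) is a strongly regular q-ary graph with parameters (v, v−2, [v−2]_q − 2, [v−2]_q; q): any two adjacent 1-subspaces x ≠ y satisfy |(N(x)∩N(y))∖{x,y}| = (q^{v−2}−1)/(q−1) − 2, and any two non-adjacent 1-subspaces satisfy |(N(x)∩N(y))∖{x,y}| = (q^{v−2}−1)/(q−1). -/
/-!
For an alternating form every line is isotropic, so for distinct lines `x, z` the plane `x ⊔ z`
is totally isotropic exactly when `z ⊥ x`. Hence the common neighbours of `x` and `y` are the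
lines of `b^⊥(x ⊔ y)`, a subspace of dimension `v - 2` by nondegeneracy, other than `x` and `y`
themselves; and `x`, `y` lie in it exactly when they are adjacent. A `d`-dimensional space over
`F_q` has `[d]_q` lines.
-/

open Module
open scoped LinearAlgebra.Projectivization

section Lines

variable {K V : Type*} [Field K] [AddCommGroup V] [Module K V]

lemma Submodule.finrank_sup_eq_two {x z : Submodule K V} [FiniteDimensional K x]
    [FiniteDimensional K z] (hx : finrank K x = 1) (hz : finrank K z = 1) (hxz : x ≠ z) :
    finrank K ↥(x ⊔ z) = 2 := by
  have hinf : finrank K ↥(x ⊓ z) = 0 := by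
    by_contra h
    exact hxz ((eq_of_le_of_finrank_le inf_le_left (by omega)).symm.trans
      (eq_of_le_of_finrank_le inf_le_right (by omega)))
  have := finrank_sup_add_finrank_inf_eq x z
  omega

instance Submodule.finite_of_finite [Finite K] [Module.Finite K V] : Finite (Submodule K V) :=
  have := Module.finite_of_finite K (M := V)
  Finite.of_injective _ SetLike.coe_injective

lemma Submodule.natCard_finrank_eq_one_le [Finite K] (W : Submodule K V)
    [FiniteDimensional K W] :
    Nat.card {z : Submodule K V // finrank K z = 1 ∧ z ≤ W} =
      (Nat.card K ^ finrank K W - 1) / (Nat.card K - 1) := by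
  have e : {z : Submodule K V // finrank K z = 1 ∧ z ≤ W} ≃ ℙ K W :=
    calc {z : Submodule K V // finrank K z = 1 ∧ z ≤ W}
        ≃ {z : {z : Submodule K V // z ≤ W} // finrank K z.1 = 1} :=
          (Equiv.subtypeSubtypeEquivSubtypeInter _ _).trans
            (Equiv.subtypeEquivRight fun _ => and_comm) |>.symm
      _ ≃ {H : Submodule K W // finrank K H = 1} :=
          ((MapSubtype.orderIso W).toEquiv.subtypeEquiv fun H => by
            rw [← finrank_map_subtype_eq W H]; rfl).symm
      _ ≃ ℙ K W := (Projectivization.equivSubmodule K W).symm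
  rw [Nat.card_congr e, Projectivization.card'', natCard_eq_pow_finrank (K := K)]

end Lines

namespace LinearMap.BilinForm

section Ring

variable {R M : Type*} [CommRing R] [AddCommGroup M] [Module R M] {B : LinearMap.BilinForm R M}
  {N L : Submodule R M}

lemma le_orthogonal_self_iff : N ≤ B.orthogonal N ↔ ∀ u ∈ N, ∀ w ∈ N, B u w = 0 :=
  forall₂_comm

lemma orthogonal_sup : B.orthogonal (N ⊔ L) = B.orthogonal N ⊓ B.orthogonal L := by
  refine le_antisymm (le_inf (orthogonal_le le_sup_left) (orthogonal_le le_sup_right)) ?_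
  rintro m ⟨hN, hL⟩ n hn
  obtain ⟨a, ha, c, hc, rfl⟩ := Submodule.mem_sup.mp hn
  simp [hN a ha, hL c hc]

lemma IsRefl.le_orthogonal_comm (hB : B.IsRefl) : N ≤ B.orthogonal L ↔ L ≤ B.orthogonal N :=
  ⟨fun h => (le_orthogonal_orthogonal hB).trans (orthogonal_le h),
   fun h => (le_orthogonal_orthogonal hB).trans (orthogonal_le h)⟩

lemma IsRefl.sup_le_orthogonal_sup_iff (hB : B.IsRefl) :
    N ⊔ L ≤ B.orthogonal (N ⊔ L) ↔
      N ≤ B.orthogonal N ∧ L ≤ B.orthogonal L ∧ L ≤ B.orthogonal N := by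
  rw [orthogonal_sup, sup_le_iff, le_inf_iff, le_inf_iff, hB.le_orthogonal_comm (N := L)]
  tauto

end Ring

section Field

variable {K V : Type*} [Field K] [AddCommGroup V] [Module K V] {B : LinearMap.BilinForm K V}

lemma IsAlt.le_orthogonal_self_of_finrank_eq_one (hB : B.IsAlt) {N : Submodule K V}
    (hN : finrank K N = 1) : N ≤ B.orthogonal N := by
  obtain ⟨v, -, hv⟩ := finrank_eq_one_iff'.mp hN
  intro m hm n hn
  obtain ⟨c, hc⟩ := hv ⟨n, hn⟩
  obtain ⟨d, hd⟩ := hv ⟨m, hm⟩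
  have hn' : c • (v : V) = n := congrArg Subtype.val hc
  have hm' : d • (v : V) = m := congrArg Subtype.val hd
  simp [← hn', ← hm', hB (v : V)]

lemma IsAlt.le_orthogonal_sup_iff (hB : B.IsAlt) {x y : Submodule K V}
    (hx : finrank K x = 1) : x ≤ B.orthogonal (x ⊔ y) ↔ y ≤ B.orthogonal x := by
  rw [orthogonal_sup, le_inf_iff, hB.isRefl.le_orthogonal_comm (N := x) (L := y)]
  simp [hB.le_orthogonal_self_of_finrank_eq_one hx]

lemma IsAlt.isotropic_plane_sup_iff_le_orthogonal [FiniteDimensional K V] (hB : B.IsAlt)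
    {x z : Submodule K V} (hx : finrank K x = 1) (hz : finrank K z = 1) (hxz : x ≠ z) :
    (finrank K ↥(x ⊔ z) = 2 ∧ ∀ u ∈ x ⊔ z, ∀ w ∈ x ⊔ z, B u w = 0) ↔ z ≤ B.orthogonal x := by
  rw [← le_orthogonal_self_iff, hB.isRefl.sup_le_orthogonal_sup_iff]
  simp [Submodule.finrank_sup_eq_two hx hz hxz, hB.le_orthogonal_self_of_finrank_eq_one hx,
    hB.le_orthogonal_self_of_finrank_eq_one hz]

end Field

end LinearMap.BilinForm

open Finset in
lemma Nat.card_subtype_and_ne_and_ne_of_pos {α : Type*} [Finite α] {P : α → Prop} {x y : α}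
    (hxy : x ≠ y) (hx : P x) (hy : P y) :
    Nat.card {z // P z ∧ z ≠ x ∧ z ≠ y} = Nat.card {z // P z} - 2 := by
  classical
  have := Fintype.ofFinite α
  have hfilter : univ.filter (fun z => P z ∧ z ≠ x ∧ z ≠ y) = univ.filter P \ {x, y} := by
    ext; simp
  rw [Nat.card_eq_fintype_card, Nat.card_eq_fintype_card, Fintype.card_subtype,
    Fintype.card_subtype, hfilter, card_sdiff_of_subset (by simp [insert_subset_iff, hx, hy]),
    card_pair hxy]

lemma Nat.card_subtype_and_ne_and_ne_of_not {α : Type*} {P : α → Prop} {x y : α}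
    (hx : ¬P x) (hy : ¬P y) :
    Nat.card {z // P z ∧ z ≠ x ∧ z ≠ y} = Nat.card {z // P z} :=
  Nat.card_congr <| Equiv.subtypeEquivRight fun _ =>
    ⟨And.left, fun hz => ⟨hz, fun h => hx (h ▸ hz), fun h => hy (h ▸ hz)⟩⟩

theorem stmt14_general {F V : Type*} [Field F] [Fintype F] [AddCommGroup V] [Module F V]
    [FiniteDimensional F V]
    (b : LinearMap.BilinForm F V) (hb : b.Nondegenerate) (halt : b.IsAlt)
    (E : Set (Submodule F V))
    (hE : E = {e : Submodule F V | finrank F ↥e = 2 ∧ ∀ u ∈ e, ∀ w ∈ e, b u w = 0}) :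
    ∀ x y : Submodule F V, finrank F ↥x = 1 → finrank F ↥y = 1 → x ≠ y →
      (x ⊔ y ∈ E →
        Nat.card {z : Submodule F V // finrank F ↥z = 1 ∧ z ≠ x ∧ z ≠ y ∧
            (z = x ∨ x ⊔ z ∈ E) ∧ (z = y ∨ y ⊔ z ∈ E)} =
          (Fintype.card F ^ (finrank F V - 2) - 1) / (Fintype.card F - 1) - 2) ∧
      (x ⊔ y ∉ E →
        Nat.card {z : Submodule F V // finrank F ↥z = 1 ∧ z ≠ x ∧ z ≠ y ∧
            (z = x ∨ x ⊔ z ∈ E) ∧ (z = y ∨ y ⊔ z ∈ E)} =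
          (Fintype.card F ^ (finrank F V - 2) - 1) / (Fintype.card F - 1)) := by
  intro x y hx hy hxy
  have hadj : ∀ {p z : Submodule F V}, finrank F p = 1 → finrank F z = 1 → p ≠ z →
      (p ⊔ z ∈ E ↔ z ≤ b.orthogonal p) :=
    hE ▸ halt.isotropic_plane_sup_iff_le_orthogonal
  have hcommon : ∀ z : Submodule F V, (finrank F z = 1 ∧ z ≠ x ∧ z ≠ y ∧
      (z = x ∨ x ⊔ z ∈ E) ∧ (z = y ∨ y ⊔ z ∈ E)) ↔
        (finrank F z = 1 ∧ z ≤ b.orthogonal (x ⊔ y)) ∧ z ≠ x ∧ z ≠ y := fun z => by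
    rw [LinearMap.BilinForm.orthogonal_sup, le_inf_iff]
    by_cases hz : finrank F z = 1 ∧ z ≠ x ∧ z ≠ y
    · obtain ⟨hz, hzx, hzy⟩ := hz
      simp only [hz, hzx, hzy, false_or, hadj hx hz hzx.symm, hadj hy hz hzy.symm]
      tauto
    · tauto
  have hxW : x ≤ b.orthogonal (x ⊔ y) ↔ y ≤ b.orthogonal x := halt.le_orthogonal_sup_iff hx
  have hyW : y ≤ b.orthogonal (x ⊔ y) ↔ y ≤ b.orthogonal x := by
    rw [sup_comm, halt.le_orthogonal_sup_iff hy, halt.isRefl.le_orthogonal_comm]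
  have hW : finrank F (b.orthogonal (x ⊔ y)) = finrank F V - 2 := by
    rw [LinearMap.BilinForm.finrank_orthogonal hb, Submodule.finrank_sup_eq_two hx hy hxy]
  rw [Nat.card_congr (Equiv.subtypeEquivRight hcommon), ← Nat.card_eq_fintype_card, ← hW,
    ← Submodule.natCard_finrank_eq_one_le, hadj hx hy hxy]
  exact ⟨fun h => Nat.card_subtype_and_ne_and_ne_of_pos hxy ⟨hx, hxW.mpr h⟩ ⟨hy, hyW.mpr h⟩,
    fun h => Nat.card_subtype_and_ne_and_ne_of_not (fun hx' => h (hxW.mp hx'.2))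
      (fun hy' => h (hyW.mp hy'.2))⟩

/-- The symplectic `q`-ary graph in `F_q^v` (`v` even, edges the totally isotropic
2-subspaces of a nondegenerate alternating form) is strongly regular with parameters
`(v, v−2, [v−2]_q − 2, [v−2]_q; q)`: adjacent 1-subspaces have
`(q^{v−2}−1)/(q−1) − 2` common neighbors (excluding themselves), and non-adjacent
distinct 1-subspaces have `(q^{v−2}−1)/(q−1)`. -/
theorem stmt14 {F V : Type*} [Field F] [Fintype F] [AddCommGroup V] [Module F V]
    [FiniteDimensional F V]
    (b : LinearMap.BilinForm F V) (hb : b.Nondegenerate) (halt : b.IsAlt)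
    (hv : Even (finrank F V))
    (E : Set (Submodule F V))
    (hE : E = {e : Submodule F V | finrank F ↥e = 2 ∧ ∀ u ∈ e, ∀ w ∈ e, b u w = 0}) :
    ∀ x y : Submodule F V, finrank F ↥x = 1 → finrank F ↥y = 1 → x ≠ y →
      (x ⊔ y ∈ E →
        Nat.card {z : Submodule F V // finrank F ↥z = 1 ∧ z ≠ x ∧ z ≠ y ∧
            (z = x ∨ x ⊔ z ∈ E) ∧ (z = y ∨ y ⊔ z ∈ E)} =
          (Fintype.card F ^ (finrank F V - 2) - 1) / (Fintype.card F - 1) - 2) ∧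
      (x ⊔ y ∉ E →
        Nat.card {z : Submodule F V // finrank F ↥z = 1 ∧ z ≠ x ∧ z ≠ y ∧
            (z = x ∨ x ⊔ z ∈ E) ∧ (z = y ∨ y ⊔ z ∈ E)} =
          (Fintype.card F ^ (finrank F V - 2) - 1) / (Fintype.card F - 1)) :=
  stmt14_general b hb halt E hE
end
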